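/- Let G = (V, A, g) be a finite directed graph with gain function g and battery capacity B > 0, and let x, y ∈ V. Suppose there is a walk P from x to y whose induced path is ascending (with respect to the zero schedule) with g(P) > 0, and a walk Q from y to x whose induced path is monotone with respect to some charge drop schedule C with g(P) + g^C(Q) > 0. Then there exists a walk W from x to y with α_0(W) = B: starting at x with an empty battery, the car can reach y with a full battery. -/

import Mathlib

open Finset

namespace EV

noncomputable section

/-- Charge after traversing `i` arcs of a path with arc gains `g`, battery capacity `B`,
initial charge `b`. -/
def charge (B b : ℝ) (g : ℕ → ℝ) : ℕ → ℝ
  | 0 => b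
  | i + 1 => min (charge B b g i + g i) B

/-- The traversal of the path with `n` arcs is feasible from initial charge `b`. -/
def Feasible (B b : ℝ) (g : ℕ → ℝ) (n : ℕ) : Prop :=
  ∀ i < n, 0 ≤ charge B b g i + g i

open Classical in
/-- Maximum final charge `α_b(P)` for a path `P` with `n` arc gains `g`,
as an extended real (`⊥ = -∞` if the traversal is infeasible). -/
def alpha (B b : ℝ) (g : ℕ → ℝ) (n : ℕ) : EReal :=
  if Feasible B b g n then ((charge B b g n : ℝ) : EReal) else ⊥

/-- Gain of the `i`-th vertex (0-indexed): the sum of the first `i` arc gains. -/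
def vGain (g : ℕ → ℝ) (i : ℕ) : ℝ := ∑ t ∈ Finset.range i, g t

/-- `P` is traversable: `α_B(P) ≥ 0`, i.e. feasible from a full battery. -/
def Traversable (B : ℝ) (g : ℕ → ℝ) (n : ℕ) : Prop := Feasible B B g n

/-- `C` is a charge drop schedule for a path with `n` arcs (vertices `0,…,n`):
no drop at the first vertex, all drops nonnegative. -/
def Schedule (C : ℕ → ℝ) (n : ℕ) : Prop := C 0 = 0 ∧ ∀ i ≤ n, 0 ≤ C i

/-- Gain of vertex `i` with respect to the charge drop schedule `C`. -/
def cGain (g C : ℕ → ℝ) (i : ℕ) : ℝ := vGain g i - ∑ t ∈ Finset.range (i + 1), C t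

/-- `P` (with `n` arcs) is ascending with respect to the schedule `C`. -/
def AscendingC (B : ℝ) (g C : ℕ → ℝ) (n : ℕ) : Prop :=
  Traversable B g n ∧ ∀ i ≤ n, 0 ≤ cGain g C i ∧ cGain g C i ≤ cGain g C n

/-- `P` (with `n` arcs) is descending with respect to the schedule `C`. -/
def DescendingC (B : ℝ) (g C : ℕ → ℝ) (n : ℕ) : Prop :=
  Traversable B g n ∧ ∀ i ≤ n, cGain g C n ≤ cGain g C i ∧ cGain g C i ≤ 0

/-- `P` is monotone with respect to the schedule `C`. -/
def MonotoneC (B : ℝ) (g C : ℕ → ℝ) (n : ℕ) : Prop :=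
  AscendingC B g C n ∨ DescendingC B g C n

/-- Ascending with respect to the zero schedule. -/
def Ascending (B : ℝ) (g : ℕ → ℝ) (n : ℕ) : Prop := AscendingC B g (fun _ => 0) n

/-- Descending with respect to the zero schedule. -/
def Descending (B : ℝ) (g : ℕ → ℝ) (n : ℕ) : Prop := DescendingC B g (fun _ => 0) n

/-- Monotone with respect to the zero schedule. -/
def MonotonePath (B : ℝ) (g : ℕ → ℝ) (n : ℕ) : Prop := Ascending B g n ∨ Descending B g n

/-- The contiguous subpath whose arcs start at arc index `a`. -/
def SubPath (g : ℕ → ℝ) (a : ℕ) : ℕ → ℝ := fun t => g (a + t)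

/-- Restriction of a charge drop schedule to the subpath starting at vertex `a`:
no drop at the subpath's first vertex. -/
def restrict (C : ℕ → ℝ) (a : ℕ) : ℕ → ℝ := fun t => if t = 0 then 0 else C (a + t)

/-- First-arc-bounded with respect to a schedule `C` (no drop at the second vertex,
and all vertex gains lie between the gains of the first two vertices). -/
def FirstArcBoundedC (g C : ℕ → ℝ) (n : ℕ) : Prop :=
  C 1 = 0 ∧
    ((0 ≤ g 0 ∧ ∀ i ≤ n, 0 ≤ cGain g C i ∧ cGain g C i ≤ g 0) ∨
     (g 0 ≤ 0 ∧ ∀ i ≤ n, g 0 ≤ cGain g C i ∧ cGain g C i ≤ 0))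

/-- Last-arc-bounded with respect to a schedule `C` (no drops at the last two vertices,
and all vertex gains lie between the gains of the last two vertices). -/
def LastArcBoundedC (g C : ℕ → ℝ) (n : ℕ) : Prop :=
  C (n - 1) = 0 ∧ C n = 0 ∧
    ((0 ≤ g (n - 1) ∧ ∀ i ≤ n, cGain g C (n - 1) ≤ cGain g C i ∧ cGain g C i ≤ cGain g C n) ∨
     (g (n - 1) < 0 ∧ ∀ i ≤ n, cGain g C n ≤ cGain g C i ∧ cGain g C i ≤ cGain g C (n - 1)))

/-- First-arc-bounded (zero schedule). -/
def FirstArcBounded (g : ℕ → ℝ) (n : ℕ) : Prop := FirstArcBoundedC g (fun _ => 0) n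

/-- Last-arc-bounded (zero schedule). -/
def LastArcBounded (g : ℕ → ℝ) (n : ℕ) : Prop := LastArcBoundedC g (fun _ => 0) n

/-- Arc-bounded: first- or last-arc-bounded. -/
def ArcBounded (g : ℕ → ℝ) (n : ℕ) : Prop := FirstArcBounded g n ∨ LastArcBounded g n

/-- A funnel: arc-bounded and containing no monotone subpath of 2 or 3 consecutive arcs. -/
def Funnel (B : ℝ) (g : ℕ → ℝ) (n : ℕ) : Prop :=
  ArcBounded g n ∧ ∀ a m, (m = 2 ∨ m = 3) → a + m ≤ n → ¬ MonotonePath B (SubPath g a) m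

/-- `j = s̄(i)`: the maximal index `j ≥ i` (among arcs of a path with `n` arcs) such that
the subpath of arcs `i,…,j` is first-arc-bounded. -/
def IsSbar (g : ℕ → ℝ) (n i j : ℕ) : Prop :=
  i ≤ j ∧ j < n ∧ FirstArcBounded (SubPath g i) (j - i + 1) ∧
    ∀ j', i ≤ j' → j' < n → FirstArcBounded (SubPath g i) (j' - i + 1) → j' ≤ j

/-- `j = s̲(i)`: the minimal index `j ≤ i` such that the subpath of arcs `j,…,i`
is last-arc-bounded. -/
def IsSlow (g : ℕ → ℝ) (n i j : ℕ) : Prop :=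
  j ≤ i ∧ i < n ∧ LastArcBounded (SubPath g j) (i - j + 1) ∧
    ∀ j', j' ≤ i → LastArcBounded (SubPath g j') (i - j' + 1) → j ≤ j'

/-- Arc gains of the walk around a cycle with `m` arc gains `g`, starting at vertex `a`. -/
def cyc (g : ℕ → ℝ) (m a : ℕ) : ℕ → ℝ := fun t => g ((a + t) % m)

/-- A walk of length `ℓ` from `x` to `y` in the directed graph with arc relation `A`. -/
def IsWalk {V : Type*} (A : V → V → Prop) (w : ℕ → V) (ℓ : ℕ) (x y : V) : Prop :=
  w 0 = x ∧ w ℓ = y ∧ ∀ t < ℓ, A (w t) (w (t + 1))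

/-- The sequence of arc gains induced by a walk `w` in a graph with gain function `g`. -/
def walkGains {V : Type*} (g : V → V → ℝ) (w : ℕ → V) : ℕ → ℝ :=
  fun t => g (w t) (w (t + 1))
/-!
Without a lower clip, the charge after `i` arcs is `b + g_i` unless the battery was last full at
some vertex `j ≤ i`, in which case it is `B + g_i - g_j`. Along a path that is monotone with
respect to a schedule `C`, both expressions are at least `min (b + g^C) B`, so such a path
turns an initial charge `b` into at least `min (b + g^C) B`. Hence the round trip `Q P` from `y`
raises any charge `c ≥ g(P)` by `g(P) + g^C(Q) > 0` until the battery is full, and `P (Q P)^j`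
reaches `y` with a full battery once `j` is large.
-/

section Charge

variable {B b b' : ℝ} {g : ℕ → ℝ}

lemma vGain_succ (g : ℕ → ℝ) (i : ℕ) : vGain g (i + 1) = vGain g i + g i :=
  Finset.sum_range_succ g i

lemma charge_le_capacity (hb : b ≤ B) : ∀ i, charge B b g i ≤ B
  | 0 => hb
  | _ + 1 => min_le_right _ _

lemma charge_mono (h : b ≤ b') : ∀ i, charge B b g i ≤ charge B b' g i
  | 0 => h
  | i + 1 => min_le_min_right B (add_le_add (charge_mono h i) le_rfl)

lemma Feasible.mono {n : ℕ} (h : b ≤ b') (hf : Feasible B b g n) : Feasible B b' g n :=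
  fun i hi => (hf i hi).trans (add_le_add (charge_mono h i) le_rfl)

lemma charge_le_add_vGain_sub (hb : b ≤ B) {i j : ℕ} (hji : j ≤ i) :
    charge B b g i ≤ B + (vGain g i - vGain g j) := by
  induction i with
  | zero => obtain rfl := Nat.le_zero.1 hji; simpa [charge] using hb
  | succ i ih =>
    rcases Nat.of_le_succ hji with hji | rfl
    · have hstep : charge B b g (i + 1) ≤ charge B b g i + g i := min_le_left _ _
      linarith [ih hji, vGain_succ g i]
    · simpa using charge_le_capacity hb (i + 1)

lemma exists_min_le_charge (B b : ℝ) (g : ℕ → ℝ) (i : ℕ) :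
    ∃ j ≤ i, min (b + vGain g i) (B + (vGain g i - vGain g j)) ≤ charge B b g i := by
  induction i with
  | zero => exact ⟨0, le_rfl, by simp [charge, vGain]⟩
  | succ i ih =>
    obtain ⟨j, hji, hj⟩ := ih
    have hcharge : charge B b g (i + 1) = min (charge B b g i + g i) B := rfl
    rcases le_total (charge B b g i + g i) B with hfree | hfull
    · refine ⟨j, hji.trans i.le_succ, ?_⟩
      rw [hcharge, min_eq_left hfree, vGain_succ]
      calc min (b + (vGain g i + g i)) (B + (vGain g i + g i - vGain g j))
          = min (b + vGain g i) (B + (vGain g i - vGain g j)) + g i := by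
            rw [← min_add_add_right]; congr 1 <;> ring
        _ ≤ charge B b g i + g i := by linarith
    · exact ⟨i + 1, le_rfl, by rw [hcharge, min_eq_right hfull]; simp⟩

lemma charge_add (B b : ℝ) (g : ℕ → ℝ) (m : ℕ) :
    ∀ k, charge B b g (m + k) = charge B (charge B b g m) (fun t => g (m + t)) k
  | 0 => rfl
  | k + 1 => by
    show min (charge B b g (m + k) + g (m + k)) B = _
    rw [charge_add B b g m k]
    rfl

lemma charge_congr {g' : ℕ → ℝ} :
    ∀ {i : ℕ}, (∀ t < i, g t = g' t) → charge B b g i = charge B b g' i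
  | 0, _ => rfl
  | i + 1, h => by
    show min (charge B b g i + g i) B = min (charge B b g' i + g' i) B
    rw [charge_congr fun t ht => h t (ht.trans i.lt_succ_self), h i i.lt_succ_self]

lemma feasible_congr {g' : ℕ → ℝ} {n : ℕ} (h : ∀ t < n, g t = g' t) :
    Feasible B b g n ↔ Feasible B b g' n :=
  forall₂_congr fun i hi => by rw [charge_congr fun t ht => h t (ht.trans hi), h i hi]

lemma feasible_add {m k : ℕ} :
    Feasible B b g (m + k) ↔
      Feasible B b g m ∧ Feasible B (charge B b g m) (fun t => g (m + t)) k := by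
  constructor
  · intro h
    refine ⟨fun i hi => h i (by omega), fun i hi => ?_⟩
    simpa [charge_add] using h (m + i) (by omega)
  · rintro ⟨hhead, htail⟩ i hi
    rcases lt_or_ge i m with him | him
    · exact hhead i him
    · obtain ⟨j, rfl⟩ := Nat.exists_eq_add_of_le him
      simpa [charge_add] using htail j (by omega)

end Charge

section Schedule

variable {B b : ℝ} {g C : ℕ → ℝ} {n : ℕ}

lemma schedule_zero : Schedule (fun _ => 0) n := ⟨rfl, fun _ _ => le_rfl⟩

lemma cGain_zero_schedule (i : ℕ) : cGain g (fun _ => 0) i = vGain g i := by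
  simp [cGain]

lemma cGain_sub_cGain_le (hC : Schedule C n) {i j : ℕ} (hji : j ≤ i) (hin : i ≤ n) :
    cGain g C i - cGain g C j ≤ vGain g i - vGain g j := by
  have hdrops : ∑ t ∈ range (j + 1), C t ≤ ∑ t ∈ range (i + 1), C t :=
    sum_le_sum_of_subset_of_nonneg (range_subset_range.2 (by omega))
      fun t ht _ => hC.2 t (by rw [mem_range] at ht; omega)
  unfold cGain
  linarith

lemma cGain_le_vGain (hC : Schedule C n) {i : ℕ} (hin : i ≤ n) : cGain g C i ≤ vGain g i := by
  simpa [cGain, vGain, hC.1] using cGain_sub_cGain_le (g := g) hC (Nat.zero_le i) hin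

lemma MonotoneC.traversable (hmono : MonotoneC B g C n) : Traversable B g n := by
  rcases hmono with h | h <;> exact h.1

lemma MonotoneC.add_vGain_nonneg (hC : Schedule C n) (hmono : MonotoneC B g C n)
    (hb0 : 0 ≤ b) (hbc : 0 ≤ b + cGain g C n) {i : ℕ} (hin : i ≤ n) :
    0 ≤ b + vGain g i := by
  have := cGain_le_vGain (g := g) hC hin
  rcases hmono with h | h
  · linarith [(h.2 i hin).1]
  · linarith [(h.2 i hin).1]

lemma MonotoneC.feasible (hC : Schedule C n) (hmono : MonotoneC B g C n)
    (hb0 : 0 ≤ b) (hbc : 0 ≤ b + cGain g C n) : Feasible B b g n := by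
  intro i hi
  obtain ⟨j, hji, hj⟩ := exists_min_le_charge B b g i
  have hfromb := hmono.add_vGain_nonneg hC hb0 hbc (i := i + 1) (by omega)
  have hfromB : 0 ≤ B + (vGain g (i + 1) - vGain g j) := by
    linarith [charge_le_add_vGain_sub (B := B) (g := g) le_rfl hji, hmono.traversable i hi,
      vGain_succ g i]
  rw [vGain_succ] at hfromb hfromB
  rcases min_choice (b + vGain g i) (B + (vGain g i - vGain g j)) with h | h <;>
    rw [h] at hj <;> linarith

lemma MonotoneC.min_le_charge (hC : Schedule C n) (hmono : MonotoneC B g C n) (hbB : b ≤ B) :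
    min (b + cGain g C n) B ≤ charge B b g n := by
  obtain ⟨j, hjn, hj⟩ := exists_min_le_charge B b g n
  refine le_trans (le_min ?_ ?_) hj
  · exact (min_le_left _ _).trans (by linarith [cGain_le_vGain (g := g) hC le_rfl])
  · have := cGain_sub_cGain_le (g := g) hC hjn le_rfl
    rcases hmono with h | h
    · exact (min_le_right _ _).trans (by linarith [(h.2 j hjn).2])
    · exact (min_le_left _ _).trans (by linarith [(h.2 j hjn).2])

end Schedule

section Walk

variable {V : Type*} {A : V → V → Prop} {g : V → V → ℝ}

def walkAppend (w₁ : ℕ → V) (m : ℕ) (w₂ : ℕ → V) : ℕ → V :=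
  fun t => if t < m then w₁ t else w₂ (t - m)

lemma IsWalk.append {w₁ w₂ : ℕ → V} {m k : ℕ} {x y z : V}
    (h₁ : IsWalk A w₁ m x y) (h₂ : IsWalk A w₂ k y z) :
    IsWalk A (walkAppend w₁ m w₂) (m + k) x z := by
  obtain ⟨h₁0, h₁m, h₁A⟩ := h₁
  obtain ⟨h₂0, h₂k, h₂A⟩ := h₂
  refine ⟨?_, by simp [walkAppend, h₂k], fun t ht => ?_⟩
  · rcases Nat.eq_zero_or_pos m with rfl | hm
    · simp [walkAppend, h₂0, ← h₁m, h₁0]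
    · simp [walkAppend, hm, h₁0]
  · unfold walkAppend
    rcases lt_or_ge (t + 1) m with ht1 | ht1
    · simpa [ht1, (Nat.lt_succ_self t).trans ht1] using h₁A t (by omega)
    · rcases Nat.lt_or_ge t m with htm | htm
      · obtain rfl : m = t + 1 := by omega
        simpa [h₂0, ← h₁m] using h₁A t htm
      · simpa [show ¬ t < m by omega, show ¬ t + 1 < m by omega,
          show t + 1 - m = t - m + 1 by omega] using h₂A (t - m) (by omega)

lemma walkGains_append_of_lt {w₁ w₂ : ℕ → V} {m t : ℕ} (hjoin : w₂ 0 = w₁ m)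
    (ht : t < m) :
    walkGains g (walkAppend w₁ m w₂) t = walkGains g w₁ t := by
  unfold walkGains walkAppend
  rcases lt_or_ge (t + 1) m with ht1 | ht1
  · simp [ht, ht1]
  · obtain rfl : m = t + 1 := by omega
    simp [hjoin]

lemma walkGains_append_add (w₁ w₂ : ℕ → V) (m t : ℕ) :
    walkGains g (walkAppend w₁ m w₂) (m + t) = walkGains g w₂ t := by
  simp [walkGains, walkAppend, show m + t + 1 - m = t + 1 by omega,
    show ¬ m + t + 1 < m by omega]

/-- Some walk from `x` to `y` is feasible from initial charge `b` and ends with charge at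
least `c`. -/
def Reach (A : V → V → Prop) (g : V → V → ℝ) (B b : ℝ) (x y : V) (c : ℝ) : Prop :=
  ∃ w ℓ, IsWalk A w ℓ x y ∧ Feasible B b (walkGains g w) ℓ ∧
    c ≤ charge B b (walkGains g w) ℓ

variable {B b c d : ℝ} {x y z : V}

lemma Reach.mono (h : Reach A g B b x y c) (hdc : d ≤ c) : Reach A g B b x y d :=
  let ⟨w, ℓ, hw, hf, hc⟩ := h
  ⟨w, ℓ, hw, hf, hdc.trans hc⟩

lemma Reach.trans (h₁ : Reach A g B b x y c) (h₂ : Reach A g B c y z d) :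
    Reach A g B b x z d := by
  obtain ⟨w₁, m, hw₁, hf₁, hc₁⟩ := h₁
  obtain ⟨w₂, k, hw₂, hf₂, hd₂⟩ := h₂
  have hjoin : w₂ 0 = w₁ m := hw₂.1.trans hw₁.2.1.symm
  have hhead : ∀ t < m, walkGains g (walkAppend w₁ m w₂) t = walkGains g w₁ t :=
    fun t ht => walkGains_append_of_lt hjoin ht
  have htail : (fun t => walkGains g (walkAppend w₁ m w₂) (m + t)) = walkGains g w₂ :=
    funext (walkGains_append_add w₁ w₂ m)
  refine ⟨_, _, hw₁.append hw₂, feasible_add.2 ⟨(feasible_congr hhead).2 hf₁, ?_⟩, ?_⟩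
  · rw [htail, charge_congr hhead]
    exact hf₂.mono hc₁
  · rw [charge_add, htail, charge_congr hhead]
    exact hd₂.trans (charge_mono hc₁ k)

lemma reach_of_monotoneC {w : ℕ → V} {ℓ : ℕ} {C : ℕ → ℝ} (hw : IsWalk A w ℓ x y)
    (hC : Schedule C ℓ) (hmono : MonotoneC B (walkGains g w) C ℓ)
    (hb0 : 0 ≤ b) (hbB : b ≤ B) (hbc : 0 ≤ b + cGain (walkGains g w) C ℓ) :
    Reach A g B b x y (min (b + cGain (walkGains g w) C ℓ) B) :=
  ⟨w, ℓ, hw, hmono.feasible hC hb0 hbc, hmono.min_le_charge hC hbB⟩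

lemma reach_capacity_of_round_trip {p q : ℝ} (hB : 0 ≤ B) (hp : 0 ≤ p) (hpq : 0 < p + q)
    (hgo : ∀ c, 0 ≤ c → c ≤ B → Reach A g B c x y (min (c + p) B))
    (hback : ∀ c, p ≤ c → c ≤ B → Reach A g B c y x (min (c + q) B)) :
    Reach A g B 0 x y B := by
  rcases le_or_gt B p with hBp | hpB
  · exact (hgo 0 le_rfl hB).mono (by simp [hBp])
  have hlap : ∀ j : ℕ, Reach A g B 0 x y (min (p + j * (p + q)) B) := by
    intro j
    induction j with
    | zero => simpa using hgo 0 le_rfl hB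
    | succ j ih =>
      set c := min (p + j * (p + q)) B
      have hpc : p ≤ c := le_min (by nlinarith [j.cast_nonneg (α := ℝ)]) hpB.le
      set c' := min (c + q) B
      have hc' : 0 ≤ c' := le_min (by linarith) hB
      refine (ih.trans ((hback c hpc (min_le_right _ _)).trans
        (hgo c' hc' (min_le_right _ _)))).mono ?_
      have hgain : min (p + (j + 1) * (p + q)) B ≤ c + (p + q) := by
        rw [← min_add_add_right]
        exact min_le_min (by linarith) (by linarith)
      push_cast
      refine le_min ?_ (min_le_right _ _)
      calc min (p + (j + 1) * (p + q)) B
          ≤ min (c + q + p) (B + p) :=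
            le_min (by linarith) (by linarith [min_le_right (p + (j + 1) * (p + q)) B])
        _ = c' + p := min_add_add_right _ _ _
  obtain ⟨j, hj⟩ := exists_nat_ge ((B - p) / (p + q))
  exact (hlap j).mono (le_min (by linarith [(div_le_iff₀ hpq).1 hj]) le_rfl)

end Walk

theorem reach_full_charge_general {V : Type*} (A : V → V → Prop) (g : V → V → ℝ)
    (B : ℝ) (hB : 0 < B) (x y : V)
    (wP : ℕ → V) (ℓP : ℕ) (hWP : IsWalk A wP ℓP x y)
    (hPasc : Ascending B (walkGains g wP) ℓP)
    (wQ : ℕ → V) (ℓQ : ℕ) (hWQ : IsWalk A wQ ℓQ y x)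
    (C : ℕ → ℝ) (hC : Schedule C ℓQ)
    (hQmono : MonotoneC B (walkGains g wQ) C ℓQ)
    (hsum : 0 < vGain (walkGains g wP) ℓP + cGain (walkGains g wQ) C ℓQ) :
    ∃ w ℓ, IsWalk A w ℓ x y ∧ alpha B 0 (walkGains g w) ℓ = ((B : ℝ) : EReal) := by
  set p := vGain (walkGains g wP) ℓP
  have hP : cGain (walkGains g wP) (fun _ => 0) ℓP = p := cGain_zero_schedule ℓP
  have hp : 0 ≤ p := by simpa [hP] using (hPasc.2 ℓP le_rfl).1
  have hgo : ∀ c, 0 ≤ c → c ≤ B → Reach A g B c x y (min (c + p) B) := fun c hc0 hcB => by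
    simpa [hP] using reach_of_monotoneC hWP schedule_zero (Or.inl hPasc) hc0 hcB
      (by rw [hP]; linarith)
  have hback : ∀ c, p ≤ c → c ≤ B →
      Reach A g B c y x (min (c + cGain (walkGains g wQ) C ℓQ) B) := fun c hpc hcB =>
    reach_of_monotoneC hWQ hC hQmono (hp.trans hpc) hcB (by linarith)
  obtain ⟨w, ℓ, hw, hfeas, hfull⟩ := reach_capacity_of_round_trip hB.le hp hsum hgo hback
  refine ⟨w, ℓ, hw, ?_⟩
  rw [alpha, if_pos hfeas, le_antisymm (charge_le_capacity hB.le ℓ) hfull]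

/-- In a finite directed graph, if there is a walk `P` from `x` to `y` whose
induced path is ascending with `g(P) > 0`, and a walk `Q` from `y` to `x` whose induced
path is monotone with respect to a schedule `C` with `g(P) + g^C(Q) > 0`, then there is a
walk `W` from `x` to `y` with `α_0(W) = B`. -/
theorem reach_full_charge {V : Type*} [Fintype V] (A : V → V → Prop) (g : V → V → ℝ)
    (B : ℝ) (hB : 0 < B) (x y : V)
    (wP : ℕ → V) (ℓP : ℕ) (hWP : IsWalk A wP ℓP x y)
    (hPasc : Ascending B (walkGains g wP) ℓP)
    (hgP : 0 < vGain (walkGains g wP) ℓP)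
    (wQ : ℕ → V) (ℓQ : ℕ) (hWQ : IsWalk A wQ ℓQ y x)
    (C : ℕ → ℝ) (hC : Schedule C ℓQ)
    (hQmono : MonotoneC B (walkGains g wQ) C ℓQ)
    (hsum : 0 < vGain (walkGains g wP) ℓP + cGain (walkGains g wQ) C ℓQ) :
    ∃ w ℓ, IsWalk A w ℓ x y ∧ alpha B 0 (walkGains g w) ℓ = ((B : ℝ) : EReal) :=
  reach_full_charge_general A g B hB x y wP ℓP hWP hPasc wQ ℓQ hWQ C hC hQmono hsum

end

end EV
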